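/- arXiv:2406.04395 — 2 statements merged into one kernel-verified Lean document; each statement's English description precedes it below -/
import Mathlib

section
/- Let {u_a}_{a=0}^{d-1} and {v_{a'}}_{a'=0}^{d-1} be two orthonormal bases of ℂ^d and suppose c_min ≤ |⟨u_a, v_{a'}⟩|² ≤ c_max for all a, a', where 0 ≤ c_min ≤ c_max ≤ 1. Then Σ_{a,a'=0}^{d-1} |⟨u_a, v_{a'}⟩|⁴ ≤ d·Ω, where Ω = L c_max² + (d − L − 1) c_min² + (1 − L c_max − (d − L − 1) c_min)² and L = ⌊(1 − c_min d)/(c_max − c_min)⌋ if c_max > c_min, L = d if c_max = c_min. -/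
open Matrix BigOperators

/-- `L = ⌊(1 − c_min d)/(c_max − c_min)⌋` if `c_max > c_min`, and `L = d` if
`c_max = c_min`. -/
noncomputable def Lval (d : ℕ) (cmin cmax : ℝ) : ℝ :=
  if cmin < cmax then ((⌊(1 - cmin * d) / (cmax - cmin)⌋ : ℤ) : ℝ) else (d : ℝ)

/-- `Ω = L c_max² + (d − L − 1) c_min² + (1 − L c_max − (d − L − 1) c_min)²`. -/
noncomputable def Omegaval (d : ℕ) (cmin cmax : ℝ) : ℝ :=
  Lval d cmin cmax * cmax ^ 2 + ((d : ℝ) - Lval d cmin cmax - 1) * cmin ^ 2 +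
    (1 - Lval d cmin cmax * cmax - ((d : ℝ) - Lval d cmin cmax - 1) * cmin) ^ 2

/-! By Parseval, each row `p a' = |⟨u_a, v_{a'}⟩|²` is a probability vector with entries in
`[c_min, c_max]`. On this polytope the convex function `∑ p²` is largest at the vertex obtained
by greedily filling entries up to `c_max`: `L` entries equal `c_max`, one entry takes the
remaining mass and the others equal `c_min`. Its value there is `Ω`, and summing over the `d`
rows gives `d·Ω`. -/

open Finset

theorem sum_sq_le_of_mem_Icc_of_sum_eq {ι : Type*} {t : ι → ℝ} {Δ : ℝ} (s : Finset ι)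
    (ht : ∀ i ∈ s, t i ∈ Set.Icc 0 Δ) :
    ∀ (N : ℕ) {ρ : ℝ}, ρ ∈ Set.Icc 0 Δ → ∑ i ∈ s, t i = N * Δ + ρ →
      ∑ i ∈ s, t i ^ 2 ≤ N * Δ ^ 2 + ρ ^ 2 := by
  classical
  induction s using Finset.induction_on with
  | empty => intro N ρ _ _; simp only [sum_empty]; positivity
  | insert x s hx ih =>
    intro N ρ ⟨hρ0, hρΔ⟩ hsum
    rw [sum_insert hx] at hsum ⊢
    obtain ⟨htx0, htxΔ⟩ := ht x (mem_insert_self x s)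
    have ht' : ∀ i ∈ s, t i ∈ Set.Icc 0 Δ := fun i hi => ht i (mem_insert_of_mem hi)
    have hrest : 0 ≤ ∑ i ∈ s, t i := sum_nonneg fun i hi => (ht' i hi).1
    by_cases hxρ : t x ≤ ρ
    · have := ih ht' N ⟨by linarith, by linarith⟩ (show _ = N * Δ + (ρ - t x) by linarith)
      nlinarith
    · -- `t x` overflows the remainder `ρ`, so it must take one full block `Δ` from `N`.
      obtain ⟨M, rfl⟩ : ∃ M, N = M + 1 := Nat.exists_eq_add_one.2 <| Nat.pos_of_ne_zero <| by
        rintro rfl; simp only [Nat.cast_zero, zero_mul, zero_add] at hsum; linarith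
      push_cast at hsum ⊢
      have := ih ht' M ⟨by linarith, by linarith⟩ (show _ = M * Δ + (Δ + ρ - t x) by linarith)
      nlinarith

theorem exists_natCast_Lval_eq {d : ℕ} {cmin cmax : ℝ} (h1 : cmin ≤ cmax)
    (hlow : cmin * d ≤ 1) (hup : 1 ≤ cmax * d) :
    ∃ N : ℕ, Lval d cmin cmax = N ∧
      1 - cmin * d - N * (cmax - cmin) ∈ Set.Icc 0 (cmax - cmin) := by
  unfold Lval
  split_ifs with hlt
  · have hΔ : 0 < cmax - cmin := sub_pos.2 hlt
    have hx : 0 ≤ (1 - cmin * d) / (cmax - cmin) := div_nonneg (by linarith) hΔ.le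
    refine ⟨_, (natCast_floor_eq_intCast_floor hx).symm, ?_, ?_⟩
    · have := Nat.floor_le hx
      rw [le_div_iff₀ hΔ] at this
      linarith
    · have := Nat.lt_floor_add_one ((1 - cmin * d) / (cmax - cmin))
      rw [div_lt_iff₀ hΔ] at this
      linarith
  · obtain rfl : cmin = cmax := le_antisymm h1 (not_lt.1 hlt)
    exact ⟨d, rfl, by simp only [sub_self, mul_zero, sub_zero, Set.Icc_self, Set.mem_singleton_iff]; linarith⟩

theorem sum_sq_le_Omegaval {ι : Type*} [Fintype ι] {p : ι → ℝ} {cmin cmax : ℝ}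
    (h1 : cmin ≤ cmax) (hp : ∀ i, p i ∈ Set.Icc cmin cmax) (hsum : ∑ i, p i = 1) :
    ∑ i, p i ^ 2 ≤ Omegaval (Fintype.card ι) cmin cmax := by
  set d := Fintype.card ι
  have hshift : ∑ i, (p i - cmin) = 1 - cmin * d := by
    rw [sum_sub_distrib, hsum, sum_const, card_univ, nsmul_eq_mul, mul_comm]
  have hlow : cmin * d ≤ 1 := by
    have := sum_nonneg fun i (_ : i ∈ univ) => sub_nonneg.2 (hp i).1
    linarith
  have hup : 1 ≤ cmax * d := by
    have := sum_le_sum fun i (_ : i ∈ univ) => (hp i).2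
    rwa [hsum, sum_const, card_univ, nsmul_eq_mul, mul_comm] at this
  obtain ⟨N, hN, hρ⟩ := exists_natCast_Lval_eq h1 hlow hup
  have hbound := sum_sq_le_of_mem_Icc_of_sum_eq univ
    (fun i _ => ⟨sub_nonneg.2 (hp i).1, sub_le_sub_right (hp i).2 cmin⟩) N hρ
    (by rw [hshift]; ring)
  have hexpand : ∑ i, p i ^ 2 = ∑ i, (p i - cmin) ^ 2 + 2 * cmin - d * cmin ^ 2 := by
    have : ∀ i, p i ^ 2 = (p i - cmin) ^ 2 + (2 * cmin * p i - cmin ^ 2) := fun i => by ring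
    rw [sum_congr rfl fun i _ => this i, sum_add_distrib, sum_sub_distrib, ← mul_sum, hsum,
      sum_const, card_univ, nsmul_eq_mul]
    ring
  have hΩ : Omegaval d cmin cmax = N * (cmax - cmin) ^ 2 +
      (1 - cmin * d - N * (cmax - cmin)) ^ 2 + 2 * cmin - d * cmin ^ 2 := by
    rw [Omegaval, hN]; ring
  linarith

section Parseval

variable {𝕜 ι n : Type*} [RCLike 𝕜] [Fintype n] [DecidableEq ι]

theorem orthonormal_toLp_iff {v : ι → n → 𝕜} :
    Orthonormal 𝕜 (fun i => WithLp.toLp 2 (v i)) ↔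
      ∀ i j, star (v i) ⬝ᵥ v j = if i = j then 1 else 0 := by
  simp only [orthonormal_iff_ite, EuclideanSpace.inner_toLp_toLp, dotProduct_comm]

theorem sum_sq_norm_star_dotProduct [Fintype ι] {v : ι → n → 𝕜}
    (hv : ∀ i j, star (v i) ⬝ᵥ v j = if i = j then 1 else 0)
    (hcard : Fintype.card ι = Fintype.card n) (w : n → 𝕜) :
    ∑ i, ‖star w ⬝ᵥ v i‖ ^ 2 = ‖WithLp.toLp 2 w‖ ^ 2 := by
  have hon := orthonormal_toLp_iff.2 hv
  let b := OrthonormalBasis.mk hon <| (hon.linearIndependent.span_eq_top_of_card_eq_finrank' <|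
    by simpa using hcard).ge
  rw [← b.sum_sq_norm_inner_left]
  simp [b, EuclideanSpace.inner_toLp_toLp, dotProduct_comm]

end Parseval

theorem stmt10_general (d : ℕ) (u v : Fin d → Fin d → ℂ)
    (hu : ∀ a b, star (u a) ⬝ᵥ u b = (if a = b then (1 : ℂ) else 0))
    (hv : ∀ a b, star (v a) ⬝ᵥ v b = (if a = b then (1 : ℂ) else 0))
    (cmin cmax : ℝ) (h1 : cmin ≤ cmax)
    (hbound : ∀ a a', cmin ≤ ‖star (u a) ⬝ᵥ v a'‖ ^ 2 ∧
      ‖star (u a) ⬝ᵥ v a'‖ ^ 2 ≤ cmax) :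
    ∑ a : Fin d, ∑ a' : Fin d, ‖star (u a) ⬝ᵥ v a'‖ ^ 4 ≤
      (d : ℝ) * Omegaval d cmin cmax := by
  have hrow (a : Fin d) : ∑ a', ‖star (u a) ⬝ᵥ v a'‖ ^ 2 = 1 := by
    rw [sum_sq_norm_star_dotProduct hv rfl, (orthonormal_toLp_iff.2 hu).1 a, one_pow]
  calc ∑ a, ∑ a', ‖star (u a) ⬝ᵥ v a'‖ ^ 4
      = ∑ a : Fin d, ∑ a', (‖star (u a) ⬝ᵥ v a'‖ ^ 2) ^ 2 := by simp only [← pow_mul]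
    _ ≤ ∑ _a : Fin d, Omegaval (Fintype.card (Fin d)) cmin cmax :=
        sum_le_sum fun a _ => sum_sq_le_Omegaval h1 (hbound a) (hrow a)
    _ = d * Omegaval d cmin cmax := by simp

/-- If `{u_a}` and `{v_{a'}}` are orthonormal bases of `ℂ^d` with
`c_min ≤ |⟨u_a, v_{a'}⟩|² ≤ c_max` for all `a, a'`, where `0 ≤ c_min ≤ c_max ≤ 1`,
then `Σ_{a,a'} |⟨u_a, v_{a'}⟩|⁴ ≤ d·Ω`. -/
theorem stmt10 (d : ℕ) (u v : Fin d → Fin d → ℂ)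
    (hu : ∀ a b, star (u a) ⬝ᵥ u b = (if a = b then (1 : ℂ) else 0))
    (hv : ∀ a b, star (v a) ⬝ᵥ v b = (if a = b then (1 : ℂ) else 0))
    (cmin cmax : ℝ) (h0 : 0 ≤ cmin) (h1 : cmin ≤ cmax) (h2 : cmax ≤ 1)
    (hbound : ∀ a a', cmin ≤ ‖star (u a) ⬝ᵥ v a'‖ ^ 2 ∧
      ‖star (u a) ⬝ᵥ v a'‖ ^ 2 ≤ cmax) :
    ∑ a : Fin d, ∑ a' : Fin d, ‖star (u a) ⬝ᵥ v a'‖ ^ 4 ≤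
      (d : ℝ) * Omegaval d cmin cmax :=
  stmt10_general d u v hu hv cmin cmax h1 hbound
end

section
/- (Maximal number of orthonormal bases with overlap constraints.) Let d ≥ 2 and suppose there exist m orthonormal bases {e^z_a}_{a=0}^{d-1} (z = 1,…,m) of ℂ^d. Then m ≤ ((d+1)/2)·(1 + √(1 + 8λ(C)(λ(C) − 1)/(d² − 1))), where λ(C) is computed from the overlaps of these bases. -/
/-!
The traceless parts `Q = |e⟩⟨e| - I/d` of the `md` basis projectors lie in the `(d² - 1)`-dimensional
space of traceless matrices, and their Hilbert–Schmidt Gram matrix has entries `|⟨e, e'⟩|² - 1/d`.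
A Gram matrix of rank `r` satisfies `(tr G)² ≤ r ‖G‖²`, which here reads
`(m(d - 1))² ≤ (d² - 1) Σ (|⟨e, e'⟩|² - 1/d)²`. A block of one basis with itself contributes `d - 1`
to the sum; a block of two different bases contributes `Σ |⟨e, e'⟩|⁴ - 1 ≤ d G^{z,z'}`, because
`c_min ≤ 1/d` (the `d²` overlaps of two bases sum to `d`). The resulting quadratic inequality in `m`
is the claim once `λ(λ - 1) = (d/2) Σ_{z ≠ z'} G^{z,z'}` is substituted.
-/

open Matrix BigOperators

/-- `c^{z,z'}_min = min_{a,a'} |⟨e^z_a, e^{z'}_{a'}⟩|²`. -/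
noncomputable def cminP (d m : ℕ) (e : Fin m → Fin d → Fin d → ℂ) (z z' : Fin m) : ℝ :=
  ⨅ q : Fin d × Fin d, ‖star (e z q.1) ⬝ᵥ e z' q.2‖ ^ 2

/-- `G^{z,z'} = 1 − (d+1)c^{z,z'}_min + (1/d)Σ_{a,a'} |⟨e^z_a, e^{z'}_{a'}⟩|⁴`. -/
noncomputable def GP (d m : ℕ) (e : Fin m → Fin d → Fin d → ℂ) (z z' : Fin m) : ℝ :=
  1 - ((d : ℝ) + 1) * cminP d m e z z' +
    (1 / d) * ∑ a : Fin d, ∑ a' : Fin d, ‖star (e z a) ⬝ᵥ e z' a'‖ ^ 4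

/-- `λ(C) = (1/2)(1 + √(1 + 2d Σ_{z≠z'} G^{z,z'}))`. -/
noncomputable def lamC (d m : ℕ) (e : Fin m → Fin d → Fin d → ℂ) : ℝ :=
  (1 + Real.sqrt (1 + 2 * d *
    ∑ z : Fin m, ∑ z' : Fin m, if z = z' then 0 else GP d m e z z')) / 2

/-- `T(C) = min{λ(C), m}`. -/
noncomputable def TCval (d m : ℕ) (e : Fin m → Fin d → Fin d → ℂ) : ℝ :=
  min (lamC d m e) m

open scoped InnerProductSpace ComplexConjugate
open Module

namespace Matrix

variable {𝕜 ι κ : Type*} [RCLike 𝕜] [Fintype ι] [Fintype κ]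

theorem ofReal_sum_sq_norm_eq_trace_mul_conjTranspose (M : Matrix ι κ 𝕜) :
    ((∑ i, ∑ j, ‖M i j‖ ^ 2 : ℝ) : 𝕜) = (M * Mᴴ).trace := by
  simp [trace, mul_apply, RCLike.mul_conj]

theorem sum_sq_norm_mul_conjTranspose_self (a : Matrix ι κ 𝕜) :
    ∑ i, ∑ j, ‖(a * aᴴ) i j‖ ^ 2 = ∑ k, ∑ l, ‖(aᴴ * a) k l‖ ^ 2 := by
  apply RCLike.ofReal_injective (K := 𝕜)
  rw [ofReal_sum_sq_norm_eq_trace_mul_conjTranspose,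
    ofReal_sum_sq_norm_eq_trace_mul_conjTranspose]
  simp only [conjTranspose_mul, conjTranspose_conjTranspose, Matrix.mul_assoc]
  rw [trace_mul_comm]
  simp only [Matrix.mul_assoc]

/-- `(tr G)² ≤ rank G · ‖G‖²` for the Gram matrix `G = aᴴ * a`, by Cauchy–Schwarz on the diagonal of
`a * aᴴ`. -/
theorem sq_re_trace_conjTranspose_mul_self_le (a : Matrix ι κ 𝕜) :
    RCLike.re (aᴴ * a).trace ^ 2 ≤ Fintype.card ι * ∑ k, ∑ l, ‖(aᴴ * a) k l‖ ^ 2 := by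
  have hdiag (i : ι) : RCLike.re ((a * aᴴ) i i) ^ 2 ≤ ∑ j, ‖(a * aᴴ) i j‖ ^ 2 :=
    calc RCLike.re ((a * aᴴ) i i) ^ 2 ≤ ‖(a * aᴴ) i i‖ ^ 2 := by
          rw [← sq_abs]; gcongr; exact RCLike.abs_re_le_norm _
      _ ≤ ∑ j, ‖(a * aᴴ) i j‖ ^ 2 :=
          Finset.single_le_sum (f := fun j => ‖(a * aᴴ) i j‖ ^ 2) (fun _ _ => by positivity)
            (Finset.mem_univ i)
  calc RCLike.re (aᴴ * a).trace ^ 2 = (∑ i, RCLike.re ((a * aᴴ) i i)) ^ 2 := by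
        rw [trace_mul_comm, trace, map_sum]; rfl
    _ ≤ Fintype.card ι * ∑ i, RCLike.re ((a * aᴴ) i i) ^ 2 := sq_sum_le_card_mul_sum_sq
    _ ≤ Fintype.card ι * ∑ i, ∑ j, ‖(a * aᴴ) i j‖ ^ 2 := by gcongr with i; exact hdiag i
    _ = Fintype.card ι * ∑ k, ∑ l, ‖(aᴴ * a) k l‖ ^ 2 := by
        rw [sum_sq_norm_mul_conjTranspose_self]

end Matrix

section Gram

variable {𝕜 E κ : Type*} [RCLike 𝕜] [NormedAddCommGroup E] [InnerProductSpace 𝕜 E]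
  [FiniteDimensional 𝕜 E] [Fintype κ]

theorem sq_sum_sq_norm_le_finrank_mul_sum_sq_norm_inner (v : κ → E) :
    (∑ k, ‖v k‖ ^ 2) ^ 2 ≤ finrank 𝕜 E * ∑ k, ∑ l, ‖⟪v k, v l⟫_𝕜‖ ^ 2 := by
  let b := stdOrthonormalBasis 𝕜 E
  let a : Matrix (Fin (finrank 𝕜 E)) κ 𝕜 := .of fun i k => ⟪b i, v k⟫_𝕜
  have hgram (k l : κ) : (aᴴ * a) k l = ⟪v k, v l⟫_𝕜 := by
    rw [← b.sum_inner_mul_inner]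
    simp [a, mul_apply, inner_conj_symm]
  have htrace : RCLike.re (aᴴ * a).trace = ∑ k, ‖v k‖ ^ 2 := by
    simp [trace, hgram]
  simpa [htrace, hgram] using a.sq_re_trace_conjTranspose_mul_self_le

theorem sq_sum_sq_norm_le_finrank_sub_one_mul_sum_sq_norm_inner (v : κ → E) {w : E}
    (hw : w ≠ 0) (hv : ∀ k, ⟪w, v k⟫_𝕜 = 0) :
    (∑ k, ‖v k‖ ^ 2) ^ 2 ≤ ((finrank 𝕜 E : ℝ) - 1) * ∑ k, ∑ l, ‖⟪v k, v l⟫_𝕜‖ ^ 2 := by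
  let K := (𝕜 ∙ w)ᗮ
  have hK : finrank 𝕜 K + 1 = finrank 𝕜 E := by
    rw [← finrank_span_singleton (K := 𝕜) hw, add_comm]
    exact Submodule.finrank_add_finrank_orthogonal _
  have := sq_sum_sq_norm_le_finrank_mul_sum_sq_norm_inner (𝕜 := 𝕜)
    (fun k => (⟨v k, (Submodule.mem_orthogonal_singleton_iff_inner_right).2 (hv k)⟩ : K))
  rw [← hK]
  simpa using this

theorem Orthonormal.sum_sq_norm_inner_left_of_card_eq_finrank {ι : Type*} [Fintype ι]
    {v : ι → E} (hv : Orthonormal 𝕜 v) (hcard : Fintype.card ι = finrank 𝕜 E) (x : E) :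
    ∑ i, ‖⟪x, v i⟫_𝕜‖ ^ 2 = ‖x‖ ^ 2 := by
  simpa using (OrthonormalBasis.mk hv
    (hv.linearIndependent.span_eq_top_of_card_eq_finrank' hcard).ge).sum_sq_norm_inner_left x

end Gram

namespace EuclideanSpace

variable {ι : Type*} [Fintype ι]

/-- The rank-one matrix `x x*`, as a vector of the Hilbert–Schmidt space `ℂ^(ι × ι)`. -/
def outerVec (x : EuclideanSpace ℂ ι) : EuclideanSpace ℂ (ι × ι) :=
  WithLp.toLp 2 fun p => x p.1 * conj (x p.2)

theorem inner_outerVec_outerVec (x y : EuclideanSpace ℂ ι) :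
    ⟪outerVec x, outerVec y⟫_ℂ = ‖⟪x, y⟫_ℂ‖ ^ 2 := by
  rw [← Complex.mul_conj']
  simp only [outerVec, PiLp.inner_apply, Fintype.sum_prod_type, map_sum, Finset.sum_mul_sum]
  refine Finset.sum_congr rfl fun i _ => Finset.sum_congr rfl fun j _ => ?_
  simp; ring

variable [DecidableEq ι]

def idVec (ι : Type*) [DecidableEq ι] : EuclideanSpace ℂ (ι × ι) :=
  WithLp.toLp 2 fun p => if p.1 = p.2 then 1 else 0

theorem inner_idVec_outerVec (x : EuclideanSpace ℂ ι) :
    ⟪idVec ι, outerVec x⟫_ℂ = ⟪x, x⟫_ℂ := by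
  simp only [outerVec, idVec, PiLp.inner_apply, Fintype.sum_prod_type, RCLike.inner_apply]
  simp [mul_comm]

theorem inner_idVec_idVec : ⟪idVec ι, idVec ι⟫_ℂ = Fintype.card ι := by
  simp only [idVec, PiLp.inner_apply, Fintype.sum_prod_type, RCLike.inner_apply]
  simp

theorem idVec_ne_zero [Nonempty ι] : idVec ι ≠ 0 := by
  intro h
  have := inner_idVec_idVec (ι := ι)
  rw [h, inner_zero_left] at this
  exact (Nat.cast_ne_zero.2 Fintype.card_ne_zero) this.symm

end EuclideanSpace

open EuclideanSpace in
theorem sq_card_mul_one_sub_inv_le_sum_sq_overlap {ι κ : Type*} [Fintype ι] [DecidableEq ι]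
    [Nonempty ι] [Fintype κ] (u : κ → EuclideanSpace ℂ ι) (hu : ∀ k, ‖u k‖ = 1) :
    (Fintype.card κ * (1 - 1 / Fintype.card ι) : ℝ) ^ 2 ≤
      ((Fintype.card ι : ℝ) ^ 2 - 1) *
        ∑ k, ∑ l, (‖⟪u k, u l⟫_ℂ‖ ^ 2 - 1 / Fintype.card ι : ℝ) ^ 2 := by
  have hd : (Fintype.card ι : ℂ) ≠ 0 := by simp
  have hself (k : κ) : ⟪u k, u k⟫_ℂ = 1 := by simp [hu k]
  have hleft (k : κ) : ⟪outerVec (u k), idVec ι⟫_ℂ = 1 := by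
    rw [← inner_conj_symm, inner_idVec_outerVec, hself, map_one]
  -- the traceless part of the projector onto `u k`; being orthogonal to `idVec` costs a dimension
  let Q (k : κ) := outerVec (u k) - (1 / Fintype.card ι : ℂ) • idVec ι
  have horth (k : κ) : ⟪idVec ι, Q k⟫_ℂ = 0 := by
    simp only [Q, inner_sub_right, inner_smul_right, inner_idVec_outerVec, inner_idVec_idVec,
      hself]
    field_simp
    ring
  have hinner (k l : κ) :
      ⟪Q k, Q l⟫_ℂ = ((‖⟪u k, u l⟫_ℂ‖ ^ 2 - 1 / Fintype.card ι : ℝ) : ℂ) := by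
    simp only [Q, inner_sub_left, inner_sub_right, inner_smul_left, inner_smul_right,
      inner_idVec_outerVec, inner_idVec_idVec, inner_outerVec_outerVec, hself, hleft]
    simp only [map_div₀, map_one, map_natCast]
    push_cast
    field_simp
    ring
  have hnorm (k : κ) : ‖Q k‖ ^ 2 = 1 - 1 / Fintype.card ι := by
    rw [← inner_self_eq_norm_sq (𝕜 := ℂ), hinner, hself]
    simp
  have := sq_sum_sq_norm_le_finrank_sub_one_mul_sum_sq_norm_inner Q idVec_ne_zero horth
  simp only [hnorm, hinner, Complex.norm_real, Real.norm_eq_abs, sq_abs, finrank_euclideanSpace,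
    Fintype.card_prod, Finset.sum_const, Finset.card_univ, nsmul_eq_mul] at this
  push_cast at this
  convert this using 2; ring

theorem star_dotProduct_eq_inner {ι : Type*} [Fintype ι] (x y : ι → ℂ) :
    star x ⬝ᵥ y = ⟪WithLp.toLp 2 x, WithLp.toLp 2 y⟫_ℂ := by
  rw [EuclideanSpace.inner_toLp_toLp, dotProduct_comm]

/-- `Σ_{z ≠ z'} G^{z,z'}`, the sum inside `λ(C)`. -/
noncomputable def sumGP (d m : ℕ) (e : Fin m → Fin d → Fin d → ℂ) : ℝ :=
  ∑ z, ∑ z', if z = z' then 0 else GP d m e z z'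

section OrthonormalBases

variable {d m : ℕ} {e : Fin m → Fin d → Fin d → ℂ}
  (honb : ∀ z a b, star (e z a) ⬝ᵥ e z b = (if a = b then (1 : ℂ) else 0))
include honb

theorem orthonormal_toLp (z : Fin m) : Orthonormal ℂ fun a => WithLp.toLp 2 (e z a) := by
  rw [orthonormal_iff_ite]
  intro a b
  rw [← star_dotProduct_eq_inner, honb]

theorem sum_sq_norm_overlap (z : Fin m) (a : Fin d) (z' : Fin m) :
    ∑ a', ‖star (e z a) ⬝ᵥ e z' a'‖ ^ 2 = 1 := by
  simp_rw [star_dotProduct_eq_inner]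
  rw [(orthonormal_toLp honb z').sum_sq_norm_inner_left_of_card_eq_finrank (by simp),
    (orthonormal_toLp honb z).1 a, one_pow]

theorem sum_sum_sq_norm_overlap (z z' : Fin m) :
    ∑ a, ∑ a', ‖star (e z a) ⬝ᵥ e z' a'‖ ^ 2 = d := by
  simp [sum_sq_norm_overlap honb]

theorem one_le_sum_pow_four_norm_overlap (hd : 0 < d) (z z' : Fin m) :
    1 ≤ ∑ a, ∑ a', ‖star (e z a) ⬝ᵥ e z' a'‖ ^ 4 := by
  have hcs := sq_sum_le_card_mul_sum_sq (s := (Finset.univ : Finset (Fin d × Fin d)))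
    (f := fun q => ‖star (e z q.1) ⬝ᵥ e z' q.2‖ ^ 2)
  simp only [Finset.card_univ, Fintype.card_prod, Fintype.card_fin, ← pow_mul,
    Fintype.sum_prod_type, sum_sum_sq_norm_overlap honb] at hcs
  have hd' : (0 : ℝ) < d := by exact_mod_cast hd
  push_cast at hcs
  exact le_of_mul_le_mul_left (a := (d : ℝ) ^ 2) (by linarith) (by positivity)

theorem cminP_le (hd : 0 < d) (z z' : Fin m) : cminP d m e z z' ≤ 1 / d := by
  have hd' : (0 : ℝ) < d := by exact_mod_cast hd
  have hmin : ∑ _q : Fin d × Fin d, cminP d m e z z' ≤ d := by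
    rw [← sum_sum_sq_norm_overlap honb z z', ← Fintype.sum_prod_type']
    exact Finset.sum_le_sum fun q _ => ciInf_le (Finite.bddBelow_range _) q
  simp only [Finset.sum_const, Finset.card_univ, Fintype.card_prod, Fintype.card_fin,
    nsmul_eq_mul, Nat.cast_mul] at hmin
  rw [le_div_iff₀ hd']
  nlinarith

theorem sum_pow_four_sub_one_div_le_GP (hd : 0 < d) (z z' : Fin m) :
    (∑ a, ∑ a', ‖star (e z a) ⬝ᵥ e z' a'‖ ^ 4 - 1) / d ≤ GP d m e z z' := by
  have hd' : (0 : ℝ) < d := by exact_mod_cast hd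
  have hc : ((d : ℝ) + 1) * cminP d m e z z' ≤ ((d : ℝ) + 1) * (1 / d) := by
    gcongr; exact cminP_le honb hd z z'
  rw [GP]
  have hsplit : ((d : ℝ) + 1) * (1 / d) = 1 + 1 / d := by field_simp
  rw [sub_div, div_eq_mul_one_div _ (d : ℝ), mul_comm]
  linarith

theorem GP_nonneg (hd : 0 < d) (z z' : Fin m) : 0 ≤ GP d m e z z' := by
  have hd' : (0 : ℝ) < d := by exact_mod_cast hd
  refine le_trans ?_ (sum_pow_four_sub_one_div_le_GP honb hd z z')
  have := one_le_sum_pow_four_norm_overlap honb hd z z'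
  positivity

theorem sum_sq_sub_inv_overlap (hd : 0 < d) (z z' : Fin m) :
    ∑ a, ∑ a', (‖star (e z a) ⬝ᵥ e z' a'‖ ^ 2 - 1 / d) ^ 2 =
      if z = z' then (d : ℝ) - 1 else ∑ a, ∑ a', ‖star (e z a) ⬝ᵥ e z' a'‖ ^ 4 - 1 := by
  have hd' : (d : ℝ) ≠ 0 := by positivity
  split_ifs with h
  · subst h
    have hterm (a a' : Fin d) : (‖star (e z a) ⬝ᵥ e z a'‖ ^ 2 - 1 / d) ^ 2 =
        (if a = a' then (1 - 2 / d : ℝ) else 0) + 1 / d ^ 2 := by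
      rw [honb]
      split_ifs
      · simp only [norm_one, one_pow]; ring
      · simp
    simp only [hterm, Finset.sum_add_distrib, Finset.sum_ite_eq, Finset.mem_univ, if_true,
      Finset.sum_const, Finset.card_univ, Fintype.card_fin, nsmul_eq_mul]
    field_simp
    ring
  · have hterm (a a' : Fin d) : (‖star (e z a) ⬝ᵥ e z' a'‖ ^ 2 - 1 / d) ^ 2 =
        ‖star (e z a) ⬝ᵥ e z' a'‖ ^ 4 - 2 / d * ‖star (e z a) ⬝ᵥ e z' a'‖ ^ 2 + 1 / d ^ 2 := by
      ring
    simp only [hterm, Finset.sum_add_distrib, Finset.sum_sub_distrib, ← Finset.mul_sum,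
      sum_sum_sq_norm_overlap honb, Finset.sum_const, Finset.card_univ, Fintype.card_fin,
      nsmul_eq_mul]
    field_simp
    ring

theorem sum_sq_sub_inv_overlap_le (hd : 0 < d) :
    ∑ z, ∑ a, ∑ z', ∑ a', (‖star (e z a) ⬝ᵥ e z' a'‖ ^ 2 - 1 / d : ℝ) ^ 2 ≤
      m * (d - 1) + d * sumGP d m e := by
  have hd' : (0 : ℝ) < d := by exact_mod_cast hd
  calc _ = ∑ z, ∑ z', ∑ a, ∑ a', (‖star (e z a) ⬝ᵥ e z' a'‖ ^ 2 - 1 / d : ℝ) ^ 2 :=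
        Finset.sum_congr rfl fun z _ => Finset.sum_comm
    _ = ∑ z, ∑ z', if z = z' then (d : ℝ) - 1
          else ∑ a, ∑ a', ‖star (e z a) ⬝ᵥ e z' a'‖ ^ 4 - 1 := by
        simp only [sum_sq_sub_inv_overlap honb hd]
    _ ≤ ∑ z, ∑ z', ((if z = z' then (d : ℝ) - 1 else 0) +
          d * if z = z' then 0 else GP d m e z z') := by
        gcongr with z _ z' _
        split_ifs
        · simp
        · have := sum_pow_four_sub_one_div_le_GP honb hd z z'
          rw [div_le_iff₀' hd'] at this
          linarith
    _ = m * (d - 1) + d * sumGP d m e := by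
        simp only [sumGP, Finset.sum_add_distrib, ← Finset.mul_sum, Finset.sum_ite_eq,
          Finset.mem_univ, if_true, Finset.sum_const, Finset.card_univ, Fintype.card_fin,
          nsmul_eq_mul]

theorem sq_mul_sub_one_le (hd : 2 ≤ d) :
    ((m : ℝ) * (d - 1)) ^ 2 ≤ ((d : ℝ) ^ 2 - 1) * (m * (d - 1) + d * sumGP d m e) := by
  have hd2 : (2 : ℝ) ≤ d := by exact_mod_cast hd
  have : Nonempty (Fin d) := ⟨⟨0, by omega⟩⟩
  have hframe := sq_card_mul_one_sub_inv_le_sum_sq_overlap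
    (fun k : Fin m × Fin d => WithLp.toLp 2 (e k.1 k.2)) fun k => (orthonormal_toLp honb k.1).1 k.2
  simp only [← star_dotProduct_eq_inner, Fintype.card_prod, Fintype.card_fin,
    Fintype.sum_prod_type] at hframe
  calc ((m : ℝ) * (d - 1)) ^ 2 = (↑(m * d) * (1 - 1 / d) : ℝ) ^ 2 := by
        push_cast; field_simp
    _ ≤ _ := hframe
    _ ≤ _ := by
        gcongr
        · nlinarith
        · exact sum_sq_sub_inv_overlap_le honb (by omega)

end OrthonormalBases

theorem le_half_mul_one_add_sqrt {d m S : ℝ} (hd : 1 < d)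
    (h : (m * (d - 1)) ^ 2 ≤ (d ^ 2 - 1) * (m * (d - 1) + d * S)) :
    m ≤ (d + 1) / 2 * (1 + √(1 + 4 * d * S / (d ^ 2 - 1))) := by
  have hd1 : 0 < d - 1 := by linarith
  have hd2 : 0 < d ^ 2 - 1 := by nlinarith
  have hsq : ((2 * m - (d + 1)) / (d + 1)) ^ 2 ≤ 1 + 4 * d * S / (d ^ 2 - 1) := by
    have hdiff : 1 + 4 * d * S / (d ^ 2 - 1) - ((2 * m - (d + 1)) / (d + 1)) ^ 2 =
        4 * ((d ^ 2 - 1) * (m * (d - 1) + d * S) - (m * (d - 1)) ^ 2) /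
          ((d - 1) ^ 2 * (d + 1) ^ 2) := by
      field_simp
      ring
    rw [← sub_nonneg, hdiff]
    have := sub_nonneg.2 h
    positivity
  calc m = (d + 1) / 2 * (1 + (2 * m - (d + 1)) / (d + 1)) := by field_simp; ring
    _ ≤ _ := by
        gcongr
        exact (le_abs_self _).trans (Real.abs_le_sqrt hsq)

theorem lamC_mul_lamC_sub_one {d m : ℕ} {e : Fin m → Fin d → Fin d → ℂ}
    (hS : 0 ≤ 1 + 2 * d * sumGP d m e) : lamC d m e * (lamC d m e - 1) = d * sumGP d m e / 2 := by
  rw [lamC, ← sumGP]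
  linear_combination Real.sq_sqrt hS / 4

/-- Maximal number of orthonormal bases with overlap constraints: if there exist `m`
orthonormal bases of `ℂ^d` (`d ≥ 2`), then
`m ≤ ((d+1)/2)(1 + √(1 + 8λ(C)(λ(C)−1)/(d²−1)))`. -/
theorem stmt12 (d m : ℕ) (hd : 2 ≤ d)
    (e : Fin m → Fin d → Fin d → ℂ)
    (honb : ∀ z a b, star (e z a) ⬝ᵥ e z b = (if a = b then (1 : ℂ) else 0)) :
    (m : ℝ) ≤ ((d : ℝ) + 1) / 2 *
      (1 + Real.sqrt (1 + 8 * lamC d m e * (lamC d m e - 1) / ((d : ℝ) ^ 2 - 1))) := by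
  have hS : 0 ≤ sumGP d m e :=
    Finset.sum_nonneg fun z _ => Finset.sum_nonneg fun z' _ => by
      split_ifs
      · rfl
      · exact GP_nonneg honb (by omega) z z'
  rw [mul_assoc, lamC_mul_lamC_sub_one (by positivity)]
  convert le_half_mul_one_add_sqrt (by exact_mod_cast hd) (sq_mul_sub_one_le honb hd) using 4
  ring
end
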